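/- arXiv:2201.10868 — 3 statements merged into one kernel-verified Lean document; each statement's English description precedes it below -/
import Mathlib

section
/- Let f, g : ℕ → ℝ be multiplicative-type arithmetic sign data in the following abstract sense: let A ⊆ ℕ be a set of positive natural density δ > 0 consisting of integers n with f(n)g(n) ≠ 0, and suppose there is a fixed positive integer m coprime to every element of A such that for every n ∈ A, sign(f(mn)g(mn)) = -sign(f(n)g(n)). Then the set F = {n : f(n)g(n) < 0} satisfies #{n ≤ x : n ∈ F} ≫ x. -/
open Filter Topology

/-- Abstract sign-change lemma: if `A` has positive lower density consisting of `n` with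
`f(n)g(n) ≠ 0`, and multiplication by a fixed `m` (coprime to all of `A`) flips the sign of
`f·g` on `A`, then `{n : f(n)g(n) < 0}` has positive lower density. -/
theorem sign_flip_positive_density (f g : ℕ → ℝ) (A : Set ℕ) (δ : ℝ) (hδ : 0 < δ)
    (hApos : ∀ n ∈ A, 0 < n)
    (hAne : ∀ n ∈ A, f n * g n ≠ 0)
    (hAdens : ∀ᶠ x : ℕ in atTop,
      (δ / 2) * (x : ℝ) ≤ (Nat.card {n : ℕ // n ≤ x ∧ n ∈ A} : ℝ))
    (m : ℕ) (hm : 0 < m)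
    (hcop : ∀ n ∈ A, Nat.Coprime m n)
    (hflip : ∀ n ∈ A, Real.sign (f (m * n) * g (m * n)) = - Real.sign (f n * g n)) :
    ∃ c : ℝ, 0 < c ∧ ∀ᶠ x : ℕ in atTop,
      c * (x : ℝ) ≤ (Nat.card {n : ℕ // n ≤ x ∧ f n * g n < 0} : ℝ) := by
  classical
  have hm' : (0 : ℝ) < m := by exact_mod_cast hm
  have hcard : ∀ (P : ℕ → Prop) (x : ℕ), Nat.card {n : ℕ // n ≤ x ∧ P n} =
      ((Finset.range (x+1)).filter (fun n => P n)).card := by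
    intro P x
    have hs : {n : ℕ | n ≤ x ∧ P n} =
        ↑((Finset.range (x+1)).filter fun n => P n) := by
      ext n; simp [Nat.lt_succ_iff, and_comm]
    rw [show Nat.card {n : ℕ // n ≤ x ∧ P n} = Nat.card {n : ℕ | n ≤ x ∧ P n} from rfl,
      Nat.card_coe_set_eq, hs, Set.ncard_coe_finset]
  set SA : ℕ → Finset ℕ := fun y => (Finset.range (y+1)).filter (fun n => n ∈ A) with hSA
  set SF : ℕ → Finset ℕ := fun y => (Finset.range (y+1)).filter (fun n => f n * g n < 0) with hSF
  -- key counting inequality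
  have key : ∀ y : ℕ, (SA y).card ≤ 2 * (SF (m * y)).card := by
    intro y
    set φ : ℕ → ℕ := fun n => if f n * g n < 0 then n else m * n with hφ
    have himg : (SA y).image φ ⊆ SF (m * y) := by
      intro b hb
      obtain ⟨n, hn, rfl⟩ := Finset.mem_image.mp hb
      rw [hSA] at hn
      simp only [Finset.mem_filter, Finset.mem_range, Nat.lt_succ_iff] at hn
      obtain ⟨hnx, hnA⟩ := hn
      by_cases h : f n * g n < 0
      · simp only [hSF, hφ, if_pos h, Finset.mem_filter, Finset.mem_range, Nat.lt_succ_iff]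
        exact ⟨le_trans hnx (Nat.le_mul_of_pos_left _ hm), h⟩
      · have hpos : 0 < f n * g n := lt_of_le_of_ne (not_lt.mp h) (Ne.symm (hAne n hnA))
        have hsgn := hflip n hnA
        rw [Real.sign_of_pos hpos] at hsgn
        have hneg : f (m * n) * g (m * n) < 0 := by
          rcases lt_trichotomy (f (m * n) * g (m * n)) 0 with h'|h'|h'
          · exact h'
          · rw [h', Real.sign_zero] at hsgn; norm_num at hsgn
          · rw [Real.sign_of_pos h'] at hsgn; norm_num at hsgn
        simp only [hSF, hφ, if_neg h, Finset.mem_filter, Finset.mem_range, Nat.lt_succ_iff]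
        exact ⟨Nat.mul_le_mul_left m hnx, hneg⟩
    have hfib : ∀ b ∈ (SA y).image φ, ((SA y).filter (fun n => φ n = b)).card ≤ 2 := by
      intro b _
      have hsub : (SA y).filter (fun n => φ n = b) ⊆ {b, b / m} := by
        intro n hn
        simp only [Finset.mem_filter] at hn
        obtain ⟨_, hb⟩ := hn
        have hb' : (if f n * g n < 0 then n else m * n) = b := hb
        simp only [Finset.mem_insert, Finset.mem_singleton]
        by_cases h : f n * g n < 0
        · rw [if_pos h] at hb'; exact Or.inl hb'
        · rw [if_neg h] at hb'
          rename_i hbb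
          right
          rw [← hb', Nat.mul_div_cancel_left n hm]
      calc ((SA y).filter (fun n => φ n = b)).card ≤ ({b, b / m} : Finset ℕ).card :=
            Finset.card_le_card hsub
        _ ≤ 2 := by
            apply le_trans (Finset.card_insert_le _ _); simp
    calc (SA y).card ≤ 2 * ((SA y).image φ).card :=
          Finset.card_le_mul_card_image _ 2 hfib
      _ ≤ 2 * (SF (m * y)).card := by
          exact Nat.mul_le_mul_left 2 (Finset.card_le_card himg)
  refine ⟨δ / (8 * m), by positivity, ?_⟩
  have hA' : ∀ᶠ y : ℕ in atTop, (δ / 2) * (y : ℝ) ≤ ((SA y).card : ℝ) := by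
    filter_upwards [hAdens] with y hy
    rwa [hcard] at hy
  have ht : Tendsto (fun x : ℕ => x / m) atTop atTop := by
    apply tendsto_atTop_atTop.mpr
    intro b
    exact ⟨b * m, fun x hx => (Nat.le_div_iff_mul_le hm).mpr hx⟩
  filter_upwards [ht.eventually hA', eventually_ge_atTop (2 * m)] with x hx hx2
  rw [hcard]
  set q := x / m with hq
  have hkey := key q
  have hmono : (SF (m * q)).card ≤ (SF x).card := by
    apply Finset.card_le_card
    apply Finset.filter_subset_filter
    apply Finset.range_subset_range.mpr
    exact Nat.succ_le_succ (Nat.mul_div_le x m)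
  have hnat : x ≤ 2 * (m * q) := by
    have hdm := Nat.div_add_mod x m
    have hmod : x % m < m := Nat.mod_lt x hm
    set t := m * (x / m) with htd
    omega
  have hxcast : (x : ℝ) ≤ 2 * m * (q : ℝ) := by
    rw [mul_assoc]
    exact_mod_cast hnat
  have hchain : ((SA q).card : ℝ) ≤ 2 * ((SF x).card : ℝ) := by
    exact_mod_cast le_trans hkey (Nat.mul_le_mul_left 2 hmono)
  have hfin : (δ / 4) * (q : ℝ) ≤ ((SF x).card : ℝ) := by
    have := hx
    linarith
  have e : δ / (8 * (m : ℝ)) * (2 * m * (q : ℝ)) = δ / 4 * (q : ℝ) := by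
    field_simp
    ring
  calc δ / (8 * (m : ℝ)) * (x : ℝ) ≤ δ / (8 * m) * (2 * m * (q : ℝ)) := by
        have h0 : (0:ℝ) ≤ δ / (8 * m) := by positivity
        exact mul_le_mul_of_nonneg_left hxcast h0
    _ = δ / 4 * (q : ℝ) := e
    _ ≤ ((SF x).card : ℝ) := hfin
end

section
/- Landau's theorem: let (a_n)_{n≥1} be a sequence of non-negative reals such that the Dirichlet series D(s) = ∑ a_n n^{-s} has finite abscissa of convergence σ_c. Then D(s) cannot be extended to a holomorphic function on any neighborhood of the real point s = σ_c. -/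
open Complex LSeries Filter

private lemma landau_logMul_iterate (A : ℕ → ℂ) (k n : ℕ) :
    (LSeries.logMul^[k] A) n = (Complex.log n) ^ k * A n := by
  induction k with
  | zero => simp
  | succ k ih =>
      rw [Function.iterate_succ_apply', LSeries.logMul, ih, pow_succ]
      ring

/-- Landau's theorem: a Dirichlet series with non-negative coefficients and finite abscissa
of convergence `σc` has a singularity at `s = σc`: it cannot be extended to a function
holomorphic on a neighborhood of `σc`. -/
theorem landau_dirichlet_singularity (a : ℕ → ℝ) (ha : ∀ n, 0 ≤ a n) (σc : ℝ)
    (hconv : ∀ s : ℂ, σc < s.re →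
      Summable fun n : ℕ => (a (n + 1) : ℂ) / ((n + 1 : ℕ) : ℂ) ^ s)
    (hdiv : ∀ σ : ℝ, σ < σc →
      ¬ Summable fun n : ℕ => a (n + 1) / ((n + 1 : ℕ) : ℝ) ^ σ) :
    ¬ ∃ (f : ℂ → ℂ) (U : Set ℂ), IsOpen U ∧ (σc : ℂ) ∈ U ∧ DifferentiableOn ℂ f U ∧
      ∀ s ∈ U, σc < s.re →
        f s = ∑' n : ℕ, (a (n + 1) : ℂ) / ((n + 1 : ℕ) : ℂ) ^ s := by
  rintro ⟨f, U, hU, hmemU, hdiff, heq⟩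
  set A : ℕ → ℂ := fun n => (a n : ℂ) with hA
  -- Step 1: abscissa of absolute convergence of A is at most σc
  have habs : abscissaOfAbsConv A ≤ (σc : EReal) := by
    apply abscissaOfAbsConv_le_of_forall_lt_LSeriesSummable
    intro y hy
    have h1 := hconv (y : ℂ) (by simpa using hy)
    have h2 : Summable fun n : ℕ => term A (y : ℂ) (n + 1) := by
      refine h1.congr fun n => ?_
      rw [term_of_ne_zero (Nat.succ_ne_zero n)]
    exact (summable_nat_add_iff 1).mp h2
  -- Step 2: LSeries A agrees with the given Dirichlet series on the half-plane
  have hLeq : ∀ s : ℂ, σc < s.re →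
      LSeries A s = ∑' n : ℕ, (a (n + 1) : ℂ) / ((n + 1 : ℕ) : ℂ) ^ s := by
    intro s hs
    have hs' : abscissaOfAbsConv A < (s.re : EReal) :=
      lt_of_le_of_lt habs (EReal.coe_lt_coe_iff.mpr hs)
    have hsum := LSeriesSummable_of_abscissaOfAbsConv_lt_re hs'
    rw [LSeries, Summable.tsum_eq_zero_add hsum, term_zero, zero_add]
    refine tsum_congr fun n => ?_
    rw [term_of_ne_zero (Nat.succ_ne_zero n)]
  -- Step 3: set up the geometry
  obtain ⟨ε, hε, hball⟩ := Metric.isOpen_iff.mp hU _ hmemU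
  set δ : ℝ := min (ε ^ 2 / 4) (1 / 2) with hδ
  have hδ0 : 0 < δ := lt_min (by positivity) one_half_pos
  have hδ1 : δ ≤ ε ^ 2 / 4 := min_le_left _ _
  have hδ2 : δ ≤ 1 / 2 := min_le_right _ _
  set σ0 : ℝ := σc + 1 with hσ0
  set c : ℂ := ((σ0 : ℝ) : ℂ) with hc
  set H : Set ℂ := {z : ℂ | σc < z.re} with hH
  have hHopen : IsOpen H := isOpen_lt continuous_const Complex.continuous_re
  have hcH : c ∈ H := by
    simp only [hH, Set.mem_setOf_eq, hc, Complex.ofReal_re, hσ0]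
    linarith
  have hsub : Metric.ball c (1 + δ) ⊆ Metric.ball ((σc : ℝ) : ℂ) ε ∪ H := by
    intro z hz
    by_cases hzre : σc < z.re
    · exact Or.inr hzre
    · push_neg at hzre
      left
      rw [Metric.mem_ball] at hz ⊢
      rw [Complex.dist_eq_re_im] at hz ⊢
      rw [Real.sqrt_lt' (by linarith)] at hz
      rw [Real.sqrt_lt' hε]
      simp only [hc, Complex.ofReal_re, Complex.ofReal_im, hσ0] at hz ⊢
      nlinarith [sq_nonneg (z.re - σc), sq_nonneg (z.im - 0)]
  -- Step 4: glue f and LSeries A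
  set g : ℂ → ℂ := fun z => if σc < z.re then LSeries A z else f z with hg
  have hgf : Set.EqOn g f (Metric.ball ((σc : ℝ) : ℂ) ε) := by
    intro z hz
    by_cases h : σc < z.re
    · simp only [hg, if_pos h]
      rw [hLeq z h]
      exact (heq z (hball hz) h).symm
    · simp only [hg, if_neg h]
  have hgL : Set.EqOn g (LSeries A) H := fun z hz => if_pos hz
  have hgdiff : DifferentiableOn ℂ g (Metric.ball c (1 + δ)) := by
    intro z hz
    rcases hsub hz with hzb | hzH
    · have hf : DifferentiableAt ℂ f z :=
        (hdiff z (hball hzb)).differentiableAt (hU.mem_nhds (hball hzb))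
      have h2 : g =ᶠ[nhds z] f :=
        Filter.eventuallyEq_of_mem (Metric.isOpen_ball.mem_nhds hzb) hgf
      exact (hf.congr_of_eventuallyEq h2).differentiableWithinAt
    · have hz' : abscissaOfAbsConv A < (z.re : EReal) :=
        lt_of_le_of_lt habs (EReal.coe_lt_coe_iff.mpr hzH)
      have hL : DifferentiableAt ℂ (LSeries A) z :=
        (LSeries_hasDerivAt hz').differentiableAt
      have h2 : g =ᶠ[nhds z] LSeries A :=
        Filter.eventuallyEq_of_mem (hHopen.mem_nhds hzH) hgL
      exact (hL.congr_of_eventuallyEq h2).differentiableWithinAt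
  -- Step 5: the iterated derivatives of g at c
  have habsc : abscissaOfAbsConv A < ((c : ℂ).re : EReal) := by
    refine lt_of_le_of_lt habs ?_
    rw [hc]
    simp only [Complex.ofReal_re]
    exact EReal.coe_lt_coe_iff.mpr (by rw [hσ0]; linarith)
  have hgc : ∀ k : ℕ, iteratedDeriv k g c = (-1) ^ k * LSeries (logMul^[k] A) c := by
    intro k
    have h1 : g =ᶠ[nhds c] LSeries A :=
      Filter.eventuallyEq_of_mem (hHopen.mem_nhds hcH) hgL
    rw [h1.iteratedDeriv_eq k]
    exact LSeries_iteratedDeriv k habsc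
  -- Step 6: real-valued terms
  set T : ℕ → ℕ → ℝ := fun k n =>
    if n = 0 then 0 else (Real.log n) ^ k * a n / (n : ℝ) ^ σ0 with hT
  have hTnonneg : ∀ k n, 0 ≤ T k n := by
    intro k n
    simp only [hT]
    split
    · exact le_rfl
    · have h1 := Real.log_natCast_nonneg n
      have h2 := ha n
      positivity
  have hterm_eq : ∀ k n, term (logMul^[k] A) (σ0 : ℂ) n = ((T k n : ℝ) : ℂ) := by
    intro k n
    rcases eq_or_ne n 0 with rfl | hn
    · simp [hT, term_zero]
    · rw [term_of_ne_zero hn, landau_logMul_iterate]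
      simp only [hT, if_neg hn, hA]
      rw [Complex.ofReal_div, Complex.ofReal_mul, Complex.ofReal_pow, Complex.natCast_log,
        Complex.ofReal_cpow (Nat.cast_nonneg n), Complex.ofReal_natCast]
  have habsk : ∀ k : ℕ, abscissaOfAbsConv (logMul^[k] A) < (((σ0 : ℂ)).re : EReal) := by
    intro k
    rw [LSeries.absicssaOfAbsConv_logPowMul]
    simpa only [hc] using habsc
  have hsummT : ∀ k, Summable (T k) := by
    intro k
    have h1 : LSeriesSummable (logMul^[k] A) (σ0 : ℂ) :=
      LSeriesSummable_of_abscissaOfAbsConv_lt_re (habsk k)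
    rw [LSeriesSummable] at h1
    exact Complex.summable_ofReal.mp (h1.congr (hterm_eq k))
  set S : ℕ → ℝ := fun k => ∑' n, T k n with hS
  have hSnonneg : ∀ k, 0 ≤ S k := fun k => tsum_nonneg (hTnonneg k)
  have hLS : ∀ k, LSeries (logMul^[k] A) (σ0 : ℂ) = ((S k : ℝ) : ℂ) := by
    intro k
    rw [LSeries, hS]
    rw [Complex.ofReal_tsum]
    exact tsum_congr (hterm_eq k)
  -- Step 7: Taylor series of g at c, evaluated at x = σc - δ/2
  set x : ℝ := σc - δ / 2 with hx
  have hxmem : ((x : ℝ) : ℂ) ∈ Metric.ball c (1 + δ) := by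
    rw [Metric.mem_ball, Complex.dist_eq]
    have h1 : ((x : ℝ) : ℂ) - c = ((x - σ0 : ℝ) : ℂ) := by push_cast [hc]; ring
    rw [h1, Complex.norm_real, Real.norm_eq_abs]
    rw [abs_of_nonpos (by rw [hx, hσ0]; linarith)]
    rw [hx, hσ0]
    linarith
  have hTaylor := Complex.hasSum_taylorSeries_on_ball hgdiff hxmem
  set t : ℝ := 1 + δ / 2 with ht
  have ht0 : 0 < t := by rw [ht]; linarith
  have hterm2 : ∀ k : ℕ,
      (k.factorial : ℂ)⁻¹ • (((x : ℝ) : ℂ) - c) ^ k • iteratedDeriv k g c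
        = ((t ^ k / k.factorial * S k : ℝ) : ℂ) := by
    intro k
    rw [hgc k]
    have h0 : (σ0 : ℂ) = c := rfl
    rw [← h0, hLS k, smul_eq_mul, smul_eq_mul]
    have hxc : ((x : ℝ) : ℂ) - c = ((-t : ℝ) : ℂ) := by
      push_cast [hc]
      rw [hx, hσ0, ht]
      push_cast
      ring
    rw [hxc]
    have hne : ((-1 : ℂ)) ^ k * ((-1 : ℂ)) ^ k = 1 := by
      rw [← mul_pow]; norm_num
    push_cast
    rw [neg_pow]
    calc (↑k.factorial : ℂ)⁻¹ * ((-1) ^ k * (t : ℂ) ^ k * ((-1) ^ k * (S k : ℂ)))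
        = ((-1 : ℂ)) ^ k * ((-1 : ℂ)) ^ k * ((↑k.factorial)⁻¹ * ((t : ℂ) ^ k * (S k : ℂ))) := by
          ring
      _ = (t : ℂ) ^ k / (k.factorial : ℂ) * (S k : ℂ) := by
          rw [hne, one_mul]; ring
  have hsummc : Summable (fun k : ℕ => t ^ k / k.factorial * S k) := by
    refine Complex.summable_ofReal.mp ?_
    refine hTaylor.summable.congr fun k => ?_
    rw [hterm2 k]
  set B : ℝ := ∑' k : ℕ, t ^ k / k.factorial * S k with hB
  -- Step 8: per-n exponential series
  have hb : ∀ n : ℕ, HasSum (fun k : ℕ => t ^ k / k.factorial * T k (n + 1))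
      (a (n + 1) / ((n + 1 : ℕ) : ℝ) ^ x) := by
    intro n
    set m : ℝ := ((n + 1 : ℕ) : ℝ) with hm
    have hm0 : 0 < m := by rw [hm]; positivity
    set y : ℝ := t * Real.log m with hy
    have h1 : HasSum (fun k : ℕ => y ^ k / k.factorial) (Real.exp y) := by
      have h0 := (NormedSpace.expSeries_div_summable y).hasSum
      have h2 : Real.exp y = ∑' k : ℕ, y ^ k / k.factorial := by
        rw [Real.exp_eq_exp_ℝ, NormedSpace.exp_eq_tsum_div]
      rw [h2]
      exact h0
    have h2 := h1.mul_right (a (n + 1) / m ^ σ0)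
    have hval : Real.exp y * (a (n + 1) / m ^ σ0) = a (n + 1) / m ^ x := by
      have h3 : Real.exp y = m ^ t := by
        rw [Real.rpow_def_of_pos hm0, hy, mul_comm]
      have h4 : m ^ σ0 = m ^ x * m ^ t := by
        rw [← Real.rpow_add hm0]
        congr 1
        rw [hσ0, hx, ht]
        ring
      rw [h3, h4]
      have h5 : m ^ x ≠ 0 := ne_of_gt (Real.rpow_pos_of_pos hm0 x)
      have h6 : m ^ t ≠ 0 := ne_of_gt (Real.rpow_pos_of_pos hm0 t)
      field_simp
    have heqf : ∀ k : ℕ, y ^ k / k.factorial * (a (n + 1) / m ^ σ0)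
        = t ^ k / k.factorial * T k (n + 1) := by
      intro k
      simp only [hT, if_neg (Nat.succ_ne_zero n)]
      rw [← hm]
      have hyk : y ^ k = t ^ k * Real.log m ^ k := by rw [hy, mul_pow]
      rw [hyk]
      ring
    rw [hval] at h2
    exact h2.congr_fun fun k => (heqf k).symm
  -- Step 9: partial sums are bounded by B
  have hble : ∀ N : ℕ, ∑ n ∈ Finset.range N, a (n + 1) / ((n + 1 : ℕ) : ℝ) ^ x ≤ B := by
    intro N
    have hsum1 : HasSum (fun k : ℕ => ∑ n ∈ Finset.range N, t ^ k / k.factorial * T k (n + 1))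
        (∑ n ∈ Finset.range N, a (n + 1) / ((n + 1 : ℕ) : ℝ) ^ x) :=
      hasSum_sum fun n _ => hb n
    rw [← hsum1.tsum_eq, hB]
    refine Summable.tsum_le_tsum (fun k => ?_) hsum1.summable hsummc
    rw [← Finset.mul_sum]
    have hTs : Summable fun n => T k (n + 1) := (summable_nat_add_iff 1).mpr (hsummT k)
    have h1 : ∑ n ∈ Finset.range N, T k (n + 1) ≤ ∑' n : ℕ, T k (n + 1) :=
      Summable.sum_le_tsum _ (fun n _ => hTnonneg k (n + 1)) hTs
    have h2 : (∑' n : ℕ, T k (n + 1)) = S k := by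
      have h0 : S k = ∑' n : ℕ, T k n := rfl
      have hT0 : T k 0 = 0 := by simp [hT]
      rw [h0, Summable.tsum_eq_zero_add (hsummT k), hT0, zero_add]
    refine le_trans (mul_le_mul_of_nonneg_left (h1.trans h2.le) ?_) le_rfl
    positivity
  -- Step 10: contradiction
  have hxσ : x < σc := by rw [hx]; linarith
  refine hdiv x hxσ ?_
  refine summable_of_sum_range_le (fun n => ?_) hble
  have h1 := ha (n + 1)
  positivity
end

section
/- Let (c_r)_{r≥0} be a sequence of real numbers with c_0 = 1, such that ∑_{r≥0} c_r X^r = g(X)/h(X) where g is a polynomial of degree ≤ 14, h(X) = ∏_{k=1}^{16} (1 - γ_k X) with all |γ_k| = 1, and g, h share no common zero on the unit circle for at least two of the γ_k. If c_r ≥ 0 for all but finitely many r, then h has a zero at X = 1, i.e., some γ_k = 1. -/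
set_option maxHeartbeats 1000000


open Filter PowerSeries Finset

private lemma geom_inv_mul (γ : ℂ) :
    (1 - PowerSeries.C γ * PowerSeries.X) * PowerSeries.mk (fun n => γ ^ n) = 1 := by
  ext n
  rw [sub_mul, one_mul, map_sub, mul_assoc]
  cases n with
  | zero => simp
  | succ m => simp [PowerSeries.coeff_succ_X_mul, pow_succ, mul_comm]

private lemma prod_mk_coeff_bound (γ : Fin 16 → ℂ) (hγ : ∀ k, ‖γ k‖ = 1)
    (s : Finset (Fin 16)) :
    ∀ n : ℕ, ‖PowerSeries.coeff n (∏ k ∈ s, PowerSeries.mk fun r => (γ k) ^ r)‖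
      ≤ ((n : ℝ) + 1) ^ s.card := by
  induction s using Finset.induction_on with
  | empty => intro n; cases n <;> simp
  | insert a s' hx ih =>
    intro n
    rw [Finset.prod_insert hx, PowerSeries.coeff_mul, Finset.card_insert_of_notMem hx]
    calc ‖∑ p ∈ Finset.HasAntidiagonal.antidiagonal n, PowerSeries.coeff p.1 (PowerSeries.mk fun r => (γ a) ^ r)
            * PowerSeries.coeff p.2 (∏ k ∈ s', PowerSeries.mk fun r => (γ k) ^ r)‖
        ≤ ∑ p ∈ Finset.HasAntidiagonal.antidiagonal n, ((n : ℝ) + 1) ^ s'.card := by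
          refine norm_sum_le_of_le _ fun p hp => ?_
          rw [norm_mul, PowerSeries.coeff_mk]
          have h1 : ‖(γ a) ^ p.1‖ = 1 := by
            rw [norm_pow]; simp [hγ a]
          rw [h1, one_mul]
          calc ‖PowerSeries.coeff p.2 (∏ k ∈ s', PowerSeries.mk fun r => (γ k) ^ r)‖
              ≤ ((p.2 : ℝ) + 1) ^ s'.card := ih p.2
            _ ≤ ((n : ℝ) + 1) ^ s'.card := by
                have hle : p.2 ≤ n := by
                  have := Finset.HasAntidiagonal.antidiagonal.snd_le hp
                  omega
                have h2 : ((p.2 : ℝ) + 1) ≤ ((n : ℝ) + 1) := by exact_mod_cast by omega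
                exact pow_le_pow_left₀ (by positivity) h2 _
      _ = ((n : ℝ) + 1) ^ (s'.card + 1) := by
          rw [Finset.sum_const, Finset.Nat.card_antidiagonal, nsmul_eq_mul, pow_succ]
          push_cast; ring

private lemma polytsum (p : Polynomial ℂ) (z : ℂ) : ∑' n : ℕ, p.coeff n * z ^ n = p.eval z := by
  rw [Polynomial.eval_eq_sum_range]
  exact tsum_eq_sum (fun n hn => by
    rw [Polynomial.coeff_eq_zero_of_natDegree_lt (by simpa using hn), zero_mul])

private lemma polysummable (p : Polynomial ℂ) (z : ℂ) :
    Summable fun n : ℕ => ‖p.coeff n * z ^ n‖ := by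
  apply summable_of_ne_finset_zero (s := Finset.range (p.natDegree + 1))
  intro n hn
  rw [Polynomial.coeff_eq_zero_of_natDegree_lt (by simpa using hn), zero_mul, norm_zero]

private lemma cauchy (c : ℕ → ℝ) (g hp : Polynomial ℂ)
    (hser : PowerSeries.mk (fun r => (c r : ℂ)) * (hp : PowerSeries ℂ) = (g : PowerSeries ℂ))
    (z : ℂ) (hs : Summable fun n : ℕ => ‖(c n : ℂ) * z ^ n‖) :
    (∑' n : ℕ, (c n : ℂ) * z ^ n) * hp.eval z = g.eval z := by
  rw [← polytsum hp z, ← polytsum g z,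
    tsum_mul_tsum_eq_tsum_sum_antidiagonal_of_summable_norm hs (polysummable hp z)]
  congr 1
  funext n
  have hterm : ∀ kl ∈ Finset.HasAntidiagonal.antidiagonal n,
      ((c kl.1 : ℂ) * z ^ kl.1) * (hp.coeff kl.2 * z ^ kl.2)
        = ((c kl.1 : ℂ) * hp.coeff kl.2) * z ^ n := by
    intro kl hkl
    rw [Finset.HasAntidiagonal.mem_antidiagonal] at hkl
    rw [← hkl, pow_add]; ring
  rw [Finset.sum_congr rfl hterm, ← Finset.sum_mul]
  congr 1
  have := congrArg (fun F => PowerSeries.coeff n F) hser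
  simpa [PowerSeries.coeff_mul, Polynomial.coeff_coe] using this

/-- If `∑ c_r X^r = g(X)/∏_{k=1}^{16}(1 - γ_k X)` with `c_0 = 1`, `deg g ≤ 14`, all `γ_k`
on the unit circle, at least two of the `γ_k` giving genuine poles (not cancelled by `g`),
and `c_r ≥ 0` for all but finitely many `r`, then some `γ_k = 1`. -/
theorem pole_at_one_of_eventually_nonneg (c : ℕ → ℝ) (hc0 : c 0 = 1)
    (γ : Fin 16 → ℂ) (hγ : ∀ k, ‖γ k‖ = 1)
    (g : Polynomial ℂ) (hdeg : g.degree ≤ 14)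
    (hser : (PowerSeries.mk fun r => (c r : ℂ)) *
        ∏ k : Fin 16, (1 - PowerSeries.C (γ k) * PowerSeries.X) = (g : PowerSeries ℂ))
    (hpole : ∃ k₁ k₂ : Fin 16, k₁ ≠ k₂ ∧
      Polynomial.eval (γ k₁)⁻¹ g ≠ 0 ∧ Polynomial.eval (γ k₂)⁻¹ g ≠ 0)
    (hpos : ∀ᶠ r : ℕ in atTop, 0 ≤ c r) :
    ∃ k, γ k = 1 := by
  by_contra hcon
  push_neg at hcon
  obtain ⟨k₁, k₂, hk12, hg1, hg2⟩ := hpole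
  have hγ0 : ∀ k, γ k ≠ 0 := by
    intro k h
    have := hγ k
    rw [h] at this
    simp at this
  set hp : Polynomial ℂ := ∏ k : Fin 16, (1 - Polynomial.C (γ k) * Polynomial.X) with hhp
  have hcoe : (hp : PowerSeries ℂ)
      = ∏ k : Fin 16, (1 - PowerSeries.C (γ k) * PowerSeries.X) := by
    rw [hhp, ← Polynomial.coeToPowerSeries.ringHom_apply, map_prod]
    simp [Polynomial.coeToPowerSeries.ringHom_apply]
  have hser' : PowerSeries.mk (fun r => (c r : ℂ)) * (hp : PowerSeries ℂ)
      = (g : PowerSeries ℂ) := by rw [hcoe]; exact hser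
  -- coefficient bound
  have hunit : (∏ k : Fin 16, (1 - PowerSeries.C (γ k) * PowerSeries.X)) *
      (∏ k : Fin 16, PowerSeries.mk fun r => (γ k) ^ r) = 1 := by
    rw [← Finset.prod_mul_distrib]
    simp [geom_inv_mul]
  have hmkc : PowerSeries.mk (fun r => (c r : ℂ)) =
      (g : PowerSeries ℂ) * ∏ k : Fin 16, PowerSeries.mk fun r => (γ k) ^ r := by
    calc PowerSeries.mk (fun r => (c r : ℂ))
        = PowerSeries.mk (fun r => (c r : ℂ)) *
            ((∏ k : Fin 16, (1 - PowerSeries.C (γ k) * PowerSeries.X)) *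
              ∏ k : Fin 16, PowerSeries.mk fun r => (γ k) ^ r) := by rw [hunit, mul_one]
      _ = (PowerSeries.mk (fun r => (c r : ℂ)) *
            ∏ k : Fin 16, (1 - PowerSeries.C (γ k) * PowerSeries.X)) *
              ∏ k : Fin 16, PowerSeries.mk fun r => (γ k) ^ r := by ring
      _ = _ := by rw [hser]
  set G : ℝ := ∑ i ∈ Finset.range 15, ‖g.coeff i‖ with hG
  have hG0 : 0 ≤ G := Finset.sum_nonneg fun j _ => norm_nonneg _
  have hGcoef : ∀ i : ℕ, ‖g.coeff i‖ ≤ G := by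
    intro i
    by_cases hi : i < 15
    · exact Finset.single_le_sum (f := fun i => ‖g.coeff i‖)
        (fun j _ => norm_nonneg _) (Finset.mem_range.mpr hi)
    · rw [Polynomial.coeff_eq_zero_of_degree_lt, norm_zero]
      · exact hG0
      · refine lt_of_le_of_lt hdeg ?_
        exact_mod_cast (by omega : (14 : ℕ) < i)
  have hcbound : ∀ n : ℕ, |c n| ≤ G * ((n : ℝ) + 1) ^ 17 := by
    intro n
    have hcn : (c n : ℂ) = PowerSeries.coeff n ((g : PowerSeries ℂ) *
        ∏ k : Fin 16, PowerSeries.mk fun r => (γ k) ^ r) := by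
      rw [← hmkc, PowerSeries.coeff_mk]
    have : |c n| = ‖(c n : ℂ)‖ := by rw [Complex.norm_real, Real.norm_eq_abs]
    rw [this, hcn, PowerSeries.coeff_mul]
    calc ‖∑ p ∈ Finset.HasAntidiagonal.antidiagonal n, PowerSeries.coeff p.1 (g : PowerSeries ℂ)
            * PowerSeries.coeff p.2 (∏ k : Fin 16, PowerSeries.mk fun r => (γ k) ^ r)‖
        ≤ ∑ p ∈ Finset.HasAntidiagonal.antidiagonal n, G * ((n : ℝ) + 1) ^ 16 := by
          refine norm_sum_le_of_le _ fun p hp' => ?_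
          rw [norm_mul, Polynomial.coeff_coe]
          have h1 : ‖PowerSeries.coeff p.2
              (∏ k ∈ (Finset.univ : Finset (Fin 16)), PowerSeries.mk fun r => (γ k) ^ r)‖
              ≤ ((p.2 : ℝ) + 1) ^ (Finset.univ : Finset (Fin 16)).card :=
            prod_mk_coeff_bound γ hγ Finset.univ p.2
          rw [Finset.card_univ, Fintype.card_fin] at h1
          have h2 : ((p.2 : ℝ) + 1) ^ 16 ≤ ((n : ℝ) + 1) ^ 16 := by
            have hle : p.2 ≤ n := by
              have := Finset.HasAntidiagonal.antidiagonal.snd_le hp'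
              omega
            have : ((p.2 : ℝ) + 1) ≤ ((n : ℝ) + 1) := by exact_mod_cast by omega
            exact pow_le_pow_left₀ (by positivity) this _
          exact mul_le_mul (hGcoef p.1) (h1.trans h2) (norm_nonneg _) hG0
      _ = ((n : ℝ) + 1) * (G * ((n : ℝ) + 1) ^ 16) := by
          rw [Finset.sum_const, Finset.Nat.card_antidiagonal, nsmul_eq_mul]
          push_cast; ring
      _ = G * ((n : ℝ) + 1) ^ 17 := by ring
  -- summability inside the disc
  have hsum_lt : ∀ z : ℂ, ‖z‖ < 1 → Summable fun n : ℕ => ‖(c n : ℂ) * z ^ n‖ := by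
    intro z hz
    have hx0 : (0 : ℝ) ≤ ‖z‖ := norm_nonneg z
    have hmaj : ∀ n : ℕ, ‖(c n : ℂ) * z ^ n‖
        ≤ (G * 2 ^ 17) * ((n : ℝ) ^ 17 * ‖z‖ ^ n + ‖z‖ ^ n) := by
      intro n
      have h217 : ((n : ℝ) + 1) ^ 17 ≤ 2 ^ 17 * ((n : ℝ) ^ 17 + 1) := by
        cases n with
        | zero => norm_num
        | succ m =>
          push_cast
          have h1 : ((m : ℝ) + 1 + 1) ≤ 2 * ((m : ℝ) + 1) := by
            have : (0 : ℝ) ≤ (m : ℝ) := Nat.cast_nonneg m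
            linarith
          calc ((m : ℝ) + 1 + 1) ^ 17 ≤ (2 * ((m : ℝ) + 1)) ^ 17 :=
                pow_le_pow_left₀ (by positivity) h1 _
            _ = 2 ^ 17 * ((m : ℝ) + 1) ^ 17 := by rw [mul_pow]
            _ ≤ 2 ^ 17 * (((m : ℝ) + 1) ^ 17 + 1) := by
                nlinarith [pow_nonneg (by positivity : (0:ℝ) ≤ (m:ℝ)+1) 17]
      have h1 : ‖(c n : ℂ) * z ^ n‖ = |c n| * ‖z‖ ^ n := by
        rw [norm_mul, norm_pow, Complex.norm_real, Real.norm_eq_abs]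
      rw [h1]
      have hzn : (0 : ℝ) ≤ ‖z‖ ^ n := pow_nonneg hx0 n
      calc |c n| * ‖z‖ ^ n ≤ (G * ((n : ℝ) + 1) ^ 17) * ‖z‖ ^ n := by
            exact mul_le_mul_of_nonneg_right (hcbound n) hzn
        _ ≤ (G * (2 ^ 17 * ((n : ℝ) ^ 17 + 1))) * ‖z‖ ^ n := by
            refine mul_le_mul_of_nonneg_right ?_ hzn
            exact mul_le_mul_of_nonneg_left h217 hG0
        _ = (G * 2 ^ 17) * ((n : ℝ) ^ 17 * ‖z‖ ^ n + ‖z‖ ^ n) := by ring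
    refine Summable.of_nonneg_of_le (fun n => norm_nonneg _) hmaj ?_
    refine Summable.mul_left _ ?_
    refine Summable.add ?_ (summable_geometric_of_lt_one hx0 hz)
    have := summable_pow_mul_geometric_of_norm_lt_one (R := ℝ) 17
      (r := ‖z‖) (by rwa [Real.norm_eq_abs, abs_of_nonneg hx0])
    exact this
  -- nonvanishing of hp on [0,1]
  have hpne : ∀ x : ℝ, 0 ≤ x → x ≤ 1 → hp.eval (x : ℂ) ≠ 0 := by
    intro x h0 h1
    rw [hhp, Polynomial.eval_prod]
    refine Finset.prod_ne_zero_iff.mpr fun k _ => ?_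
    simp only [Polynomial.eval_sub, Polynomial.eval_one, Polynomial.eval_mul,
      Polynomial.eval_C, Polynomial.eval_X]
    intro h
    have hx : γ k * (x : ℂ) = 1 := (sub_eq_zero.mp h).symm
    have habs := congrArg (‖·‖) hx
    rw [norm_mul, hγ k, one_mul, norm_one, Complex.norm_real, Real.norm_eq_abs, abs_of_nonneg h0] at habs
    have hx1 : x = 1 := habs
    apply hcon k
    rw [hx1] at hx
    simpa using hx
  -- boundedness of g/hp on [0,1]
  have hcont : ContinuousOn (fun x : ℝ => ‖g.eval (x : ℂ) / hp.eval (x : ℂ)‖)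
      (Set.Icc 0 1) := by
    apply ContinuousOn.norm
    apply ContinuousOn.div
    · exact ((g.continuous_aeval).comp Complex.continuous_ofReal).continuousOn
    · exact ((hp.continuous_aeval).comp Complex.continuous_ofReal).continuousOn
    · exact fun x hx => hpne x hx.1 hx.2
  obtain ⟨x₀, hx₀mem, hx₀max⟩ := isCompact_Icc.exists_isMaxOn
    (Set.nonempty_Icc.mpr zero_le_one) hcont
  set M : ℝ := ‖g.eval ((x₀ : ℝ) : ℂ) / hp.eval ((x₀ : ℝ) : ℂ)‖ with hM
  -- bound on the sum for x in [0,1)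
  have hSbound : ∀ x : ℝ, 0 ≤ x → x < 1 → ‖∑' n : ℕ, (c n : ℂ) * (x : ℂ) ^ n‖ ≤ M := by
    intro x h0 h1
    have hz : ‖((x : ℝ) : ℂ)‖ < 1 := by
      rw [Complex.norm_real, Real.norm_eq_abs, abs_of_nonneg h0]; exact h1
    have hcprod := cauchy c g hp hser' (x : ℂ) (hsum_lt _ hz)
    have hne := hpne x h0 h1.le
    have heq : (∑' n : ℕ, (c n : ℂ) * (x : ℂ) ^ n) = g.eval (x : ℂ) / hp.eval (x : ℂ) :=
      eq_div_of_mul_eq hne hcprod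
    rw [heq]
    exact hx₀max ⟨h0, h1.le⟩
  -- real summability and cast
  have hsumR : ∀ x : ℝ, 0 ≤ x → x < 1 → Summable fun n : ℕ => c n * x ^ n := by
    intro x h0 h1
    have hz : ‖((x : ℝ) : ℂ)‖ < 1 := by
      rw [Complex.norm_real, Real.norm_eq_abs, abs_of_nonneg h0]; exact h1
    have := hsum_lt _ hz
    have heq : ∀ n : ℕ, ‖(c n : ℂ) * (x : ℂ) ^ n‖ = |c n * x ^ n| := by
      intro n
      rw [norm_mul, norm_pow, Complex.norm_real, Real.norm_eq_abs, Complex.norm_real,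
        Real.norm_eq_abs, abs_mul, abs_pow]
    exact (summable_abs_iff.mp ((this.congr heq)))
  have hcast : ∀ x : ℝ, 0 ≤ x → x < 1 →
      ((∑' n : ℕ, c n * x ^ n : ℝ) : ℂ) = ∑' n : ℕ, (c n : ℂ) * (x : ℂ) ^ n := by
    intro x h0 h1
    rw [Complex.ofReal_tsum]
    congr 1
    funext n
    push_cast
    ring
  -- tail positivity
  obtain ⟨R, hR⟩ := eventually_atTop.mp hpos
  set B : ℝ := ∑ i ∈ Finset.range R, |c i| with hB
  have key : ∀ N : ℕ, ∑ i ∈ Finset.range N, c (i + R) ≤ M + B := by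
    intro N
    set ψ : ℝ → ℝ := fun x => ∑ i ∈ Finset.range N, c (i + R) * x ^ (i + R) with hψ
    have hψcont : Continuous ψ := by
      apply continuous_finset_sum
      intro i _
      exact (continuous_const.mul (continuous_pow _))
    have hψle : ∀ x ∈ Set.Ioo (0 : ℝ) 1, ψ x ≤ M + B := by
      intro x hx
      obtain ⟨h0, h1⟩ := hx
      have hsm := hsumR x h0.le h1
      have hsplit := Summable.sum_add_tsum_nat_add R hsm
      have htail : Summable fun i : ℕ => c (i + R) * x ^ (i + R) :=
        (summable_nat_add_iff R).mpr hsm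
      have hfin : ψ x ≤ ∑' i : ℕ, c (i + R) * x ^ (i + R) := by
        refine Summable.sum_le_tsum _ (fun i _ => ?_) htail
        exact mul_nonneg (hR _ (by omega)) (pow_nonneg h0.le _)
      have hhead : |∑ i ∈ Finset.range R, c i * x ^ i| ≤ B := by
        calc |∑ i ∈ Finset.range R, c i * x ^ i| ≤ ∑ i ∈ Finset.range R, |c i * x ^ i| :=
              Finset.abs_sum_le_sum_abs _ _
          _ ≤ ∑ i ∈ Finset.range R, |c i| := by
              refine Finset.sum_le_sum fun i _ => ?_
              rw [abs_mul, abs_pow, abs_of_nonneg h0.le]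
              calc |c i| * x ^ i ≤ |c i| * 1 := by
                    refine mul_le_mul_of_nonneg_left ?_ (abs_nonneg _)
                    exact pow_le_one₀ h0.le h1.le
                _ = |c i| := mul_one _
      have hS : ∑' n : ℕ, c n * x ^ n ≤ M := by
        have hb := hSbound x h0.le h1
        rw [← hcast x h0.le h1, Complex.norm_real, Real.norm_eq_abs] at hb
        exact (le_abs_self _).trans hb
      have : ∑' i : ℕ, c (i + R) * x ^ (i + R)
          = (∑' n : ℕ, c n * x ^ n) - ∑ i ∈ Finset.range R, c i * x ^ i := by
        rw [← hsplit]; ring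
      rw [this] at hfin
      have := abs_le.mp hhead
      linarith
    haveI : (nhdsWithin (1 : ℝ) (Set.Ioo (0 : ℝ) 1)).NeBot :=
      right_nhdsWithin_Ioo_neBot (by norm_num)
    have htend : Tendsto ψ (nhdsWithin 1 (Set.Ioo 0 1)) (nhds (ψ 1)) :=
      (hψcont.tendsto 1).mono_left nhdsWithin_le_nhds
    have hψ1 : ψ 1 ≤ M + B :=
      le_of_tendsto htend (eventually_nhdsWithin_of_forall hψle)
    simpa [hψ] using hψ1
  have hsumc : Summable fun i : ℕ => c (i + R) :=
    summable_of_sum_range_le (fun i => hR _ (by omega)) key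
  have hsumabs : Summable fun n : ℕ => |c n| := by
    have h1 : Summable fun i : ℕ => |c (i + R)| :=
      hsumc.congr fun i => (abs_of_nonneg (hR (i + R) (Nat.le_add_left R i))).symm
    exact (summable_nat_add_iff R).mp h1
  -- conclude at the boundary point
  set z₀ : ℂ := (γ k₁)⁻¹ with hz₀def
  have hz₀ : ‖z₀‖ = 1 := by
    rw [hz₀def, norm_inv, hγ k₁, inv_one]
  have hsz : Summable fun n : ℕ => ‖(c n : ℂ) * z₀ ^ n‖ := by
    refine hsumabs.congr fun n => ?_
    rw [norm_mul, norm_pow, hz₀, one_pow, mul_one, Complex.norm_real, Real.norm_eq_abs]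
  have hc2 := cauchy c g hp hser' z₀ hsz
  have hpz : hp.eval z₀ = 0 := by
    rw [hhp, Polynomial.eval_prod]
    refine Finset.prod_eq_zero (Finset.mem_univ k₁) ?_
    simp only [Polynomial.eval_sub, Polynomial.eval_one, Polynomial.eval_mul,
      Polynomial.eval_C, Polynomial.eval_X, hz₀def]
    rw [mul_inv_cancel₀ (hγ0 k₁), sub_self]
  rw [hpz, mul_zero] at hc2
  exact hg1 hc2.symm
end
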